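/- Let m ≥ 6, and let p, v_0 be as in the explicit construction on H = ℂ^N (N = 2m³ + 8m² + 7m + 2). Let s be a diagonal symmetry on H with s(a_i) = ε_i a_i and s(b_i) = ε'_i b_i (all ε_i, ε'_i = ±1), and set α = #{i : 1 ≤ i ≤ m², ε_i = 1}. If α ≤ m²/4, then ‖p s p (v_0)‖ ≥ ((m² − 4m − 2)/4) · δ_p, where δ_p = 2/(m+1)². -/

import Mathlib

open Finset

lemma diag_apply {ι : Type} [Fintype ι] [DecidableEq ι]
    (s : EuclideanSpace ℂ ι →L[ℂ] EuclideanSpace ℂ ι) (ε : ι → ℝ)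
    (hs : ∀ x, s (EuclideanSpace.single x (1:ℂ)) = (ε x : ℂ) • EuclideanSpace.single x 1)
    (w : EuclideanSpace ℂ ι) (y : ι) : s w y = (ε y : ℂ) * w y := by
  have hw : w = ∑ i, w i • EuclideanSpace.single i (1:ℂ) := by
    ext z
    have : (∑ i, w i • EuclideanSpace.single i (1:ℂ)) z
        = ∑ i, (w i • EuclideanSpace.single i (1:ℂ)) z :=
      by rw [WithLp.ofLp_sum]; exact Finset.sum_apply z Finset.univ _
    rw [this]
    simp [EuclideanSpace.single_apply]
  conv_lhs => rw [hw]
  rw [map_sum]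
  simp_rw [map_smul, hs]
  have : (∑ i, w i • ((ε i : ℂ) • EuclideanSpace.single i (1:ℂ))) y
      = ∑ i, (w i • ((ε i : ℂ) • EuclideanSpace.single i (1:ℂ))) y :=
    by rw [WithLp.ofLp_sum]; exact Finset.sum_apply y Finset.univ _
  rw [this]
  simp [EuclideanSpace.single_apply, mul_comm]



/-- Index set for the standard orthonormal basis of Weaver's counterexample:
`a`-indices `Fin (m²)`, `b`-indices `Fin (2m+1)`, `c`-indices the pairs
`(i, j)` with `i < j` in `Fin (2m+1)`, and `d`-indices
`Fin (2m+1) × Fin ((m+1)²)`.  Its cardinality is `2m³ + 8m² + 7m + 2`. -/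
abbrev WeaverIdx (m : ℕ) :=
  Fin (m ^ 2) ⊕ (Fin (2 * m + 1) ⊕
    ({q : Fin (2 * m + 1) × Fin (2 * m + 1) // q.1 < q.2} ⊕
      (Fin (2 * m + 1) × Fin ((m + 1) ^ 2))))

/-- The Hilbert space `H = ℂ^N`, `N = 2m³ + 8m² + 7m + 2`, with its standard
basis indexed by `WeaverIdx m`. -/
abbrev WeaverH (m : ℕ) := EuclideanSpace ℂ (WeaverIdx m)

/-- The vector `v₀ = Σᵢ (1/(m+1)) aᵢ + Σᵢ (1/(m+1)) bᵢ`. -/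
noncomputable def weaverV0 (m : ℕ) : WeaverH m := WithLp.toLp 2 fun (x : WeaverIdx m) =>
  match x with
  | Sum.inl _ => 1 / ((m : ℂ) + 1)
  | Sum.inr (Sum.inl _) => 1 / ((m : ℂ) + 1)
  | Sum.inr (Sum.inr _) => 0

/-- The vector
`vᵢ = Σⱼ (−1/(m²(m+1))) aⱼ + (1/(m+1)) bᵢ + Σ_{j<i} (1/(m(m+1))) c_{ji}
  + Σ_{j>i} (−1/(m(m+1))) c_{ij} + Σⱼ (1/m)√((m−1)/(m+1)) d_{ij}`,
for `i` ranging over `Fin (2m+1)`. -/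
noncomputable def weaverV (m : ℕ) (i : Fin (2 * m + 1)) : WeaverH m := WithLp.toLp 2 fun (x : WeaverIdx m) =>
  match x with
  | Sum.inl _ => -1 / ((m : ℂ) ^ 2 * ((m : ℂ) + 1))
  | Sum.inr (Sum.inl k) => if k = i then 1 / ((m : ℂ) + 1) else 0
  | Sum.inr (Sum.inr (Sum.inl q)) =>
      if q.1.2 = i then 1 / ((m : ℂ) * ((m : ℂ) + 1))
      else if q.1.1 = i then -1 / ((m : ℂ) * ((m : ℂ) + 1)) else 0
  | Sum.inr (Sum.inr (Sum.inr q)) =>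
      if q.1 = i then (1 / (m : ℂ)) * (Real.sqrt (((m : ℝ) - 1) / ((m : ℝ) + 1)) : ℝ)
      else 0

/-- The family `v₀, v₁, ..., v_{2m+1}` of `2m+2` vectors. -/
noncomputable def weaverFam (m : ℕ) : Fin (2 * m + 1 + 1) → WeaverH m :=
  Fin.cases (weaverV0 m) (weaverV m)

/-- The span of `v₀, v₁, ..., v_{2m+1}`, the range of the projection `p`. -/
noncomputable def weaverSpan (m : ℕ) : Submodule ℂ (WeaverH m) :=
  Submodule.span ℂ (Set.range (weaverFam m))

/-- The orthogonal projection `p` of `H` onto the span of `v₀, ..., v_{2m+1}`,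
as a continuous linear endomorphism of `H`. -/
noncomputable def weaverP (m : ℕ) : WeaverH m →L[ℂ] WeaverH m :=
  (weaverSpan m).subtypeL.comp (Submodule.orthogonalProjectionOnto (weaverSpan m))

/-- If the number `α` of indices `i` with `s(aᵢ) = aᵢ` satisfies `α ≤ m²/4`,
then `‖psp(v₀)‖ ≥ ((m² − 4m − 2)/4) · δ_p`, where `δ_p = 2/(m+1)²`. -/
theorem weaver_psp_v0_lower_bound_small_alpha (m : ℕ) (hm : 6 ≤ m)
    (s : WeaverH m →L[ℂ] WeaverH m) (ε : WeaverIdx m → ℝ)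
    (hε : ∀ x, ε x = 1 ∨ ε x = -1)
    (hs : ∀ x : WeaverIdx m,
      s (EuclideanSpace.single x (1 : ℂ)) = (ε x : ℂ) • EuclideanSpace.single x (1 : ℂ))
    (hα : ((Finset.univ.filter fun i : Fin (m ^ 2) => ε (Sum.inl i) = 1).card : ℝ) ≤
      (m : ℝ) ^ 2 / 4) :
    ‖weaverP m (s (weaverP m (weaverV0 m)))‖ ≥
      (((m : ℝ) ^ 2 - 4 * m - 2) / 4) * (2 / ((m : ℝ) + 1) ^ 2) := by
  have hm1 : (0:ℝ) < (m:ℝ) + 1 := by positivity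
  have hmR : (6:ℝ) ≤ (m:ℝ) := by exact_mod_cast hm
  -- v₀ is in the span, so p v₀ = v₀
  have hpmem : (Submodule.orthogonalProjectionOnto (weaverSpan m) (weaverV0 m) : WeaverH m) = weaverV0 m :=
    Submodule.starProjection_eq_self_iff.mpr (Submodule.subset_span ⟨0, by simp [weaverFam]⟩)
  have hpv0 : weaverP m (weaverV0 m) = weaverV0 m := by
    simpa only [weaverP, ContinuousLinearMap.comp_apply, Submodule.subtypeL_apply] using hpmem
  -- ‖v₀‖ = 1
  have hcnorm : ‖(1:ℂ)/((m:ℂ)+1)‖ ^ 2 = 1/((m:ℝ)+1)^2 := by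
    rw [norm_div, norm_one]
    have h1 : ((m:ℂ)+1) = ((((m:ℝ)+1) : ℝ) : ℂ) := by push_cast; ring
    rw [h1, Complex.norm_real, Real.norm_of_nonneg (by positivity)]
    rw [div_pow, one_pow]
  have hnorm : ‖weaverV0 m‖ = 1 := by
    rw [EuclideanSpace.norm_eq]
    have hsum : ∑ x : WeaverIdx m, ‖weaverV0 m x‖ ^ 2 = 1 := by
      rw [Fintype.sum_sum_type, Fintype.sum_sum_type]
      simp only [weaverV0, norm_zero]
      rw [Finset.sum_const, Finset.sum_const, Finset.sum_const]
      simp only [card_univ, Fintype.card_fin, smul_eq_mul, nsmul_eq_mul, hcnorm]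
      push_cast
      rw [zero_pow (by norm_num), mul_zero]
      field_simp
      ring
    rw [hsum, Real.sqrt_one]
  -- s acts diagonally
  have hsv : ∀ y, s (weaverV0 m) y = (ε y : ℂ) * weaverV0 m y := diag_apply s ε hs _
  -- the total signed sum
  set T : ℝ := (∑ i : Fin (m^2), ε (Sum.inl i)) +
      ∑ i : Fin (2*m+1), ε (Sum.inr (Sum.inl i)) with hT
  -- inner product ⟪v₀, s v₀⟫
  have hinner : (inner ℂ (weaverV0 m) (s (weaverV0 m)) : ℂ) = (T : ℂ) / ((m:ℂ)+1)^2 := by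
    rw [PiLp.inner_apply]
    have hterm : ∀ x : WeaverIdx m,
        (inner ℂ (weaverV0 m x) (s (weaverV0 m) x) : ℂ)
          = (starRingEnd ℂ) (weaverV0 m x) * ((ε x : ℂ) * weaverV0 m x) := by
      intro x; rw [RCLike.inner_apply', hsv]
    simp_rw [hterm]
    rw [Fintype.sum_sum_type, Fintype.sum_sum_type]
    have hconj : (starRingEnd ℂ) ((1:ℂ)/((m:ℂ)+1)) = 1/((m:ℂ)+1) := by
      rw [map_div₀, map_one, map_add, map_one, Complex.conj_natCast]
    simp only [weaverV0, hconj, map_zero, zero_mul, mul_zero, Finset.sum_const_zero, add_zero]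
    have hx : ∀ r : ℂ, (1/((m:ℂ)+1)) * (r * (1/((m:ℂ)+1))) = r / ((m:ℂ)+1)^2 := by
      intro r; field_simp
    simp_rw [hx]
    rw [← Finset.sum_div, ← Finset.sum_div, ← add_div]
    push_cast [hT]
    ring
  -- relate to the projection
  have hinner2 : (inner ℂ (weaverV0 m) (weaverP m (s (weaverV0 m))) : ℂ)
      = (T : ℂ) / ((m:ℂ)+1)^2 := by
    rw [← hinner]
    simp only [weaverP, ContinuousLinearMap.comp_apply, Submodule.subtypeL_apply]
    rw [Submodule.coe_orthogonalProjectionOnto_apply, ← Submodule.inner_starProjection_left_eq_right,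
      Submodule.starProjection_apply, hpmem]
  -- norm of the inner product
  have hnormT : ‖((T : ℂ) / ((m:ℂ)+1)^2)‖ = |T| / ((m:ℝ)+1)^2 := by
    have h1 : ((m:ℂ)+1)^2 = (((((m:ℝ)+1)^2) : ℝ) : ℂ) := by push_cast; ring
    rw [norm_div, h1, Complex.norm_real, Complex.norm_real, Real.norm_eq_abs,
      Real.norm_eq_abs, abs_of_nonneg (by positivity : (0:ℝ) ≤ ((m:ℝ)+1)^2)]
  -- bound on the a-part sum
  set A := Finset.univ.filter fun i : Fin (m ^ 2) => ε (Sum.inl i) = 1 with hA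
  have hSa : ∑ i : Fin (m^2), ε (Sum.inl i) = 2*(A.card:ℝ) - (m:ℝ)^2 := by
    have hsplit := Finset.sum_filter_add_sum_filter_not Finset.univ
      (fun i : Fin (m^2) => ε (Sum.inl i) = 1) (fun i => ε (Sum.inl i))
    have h1 : ∑ i ∈ A, ε (Sum.inl i) = (A.card : ℝ) := by
      rw [Finset.sum_congr rfl (fun i hi => (Finset.mem_filter.mp hi).2)]
      simp [hA]
    have h2 : ∑ i ∈ (Finset.univ.filter fun i : Fin (m^2) => ¬ ε (Sum.inl i) = 1),
        ε (Sum.inl i)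
        = -(((Finset.univ.filter fun i : Fin (m^2) => ¬ ε (Sum.inl i) = 1).card : ℝ)) := by
      rw [Finset.sum_congr rfl (fun i hi => by
        rcases hε (Sum.inl i) with h | h
        · exact absurd h (Finset.mem_filter.mp hi).2
        · exact h)]
      simp
    have h3 := Finset.card_filter_add_card_filter_not
      (s := (Finset.univ : Finset (Fin (m^2)))) (fun i => ε (Sum.inl i) = 1)
    rw [Finset.card_univ, Fintype.card_fin] at h3
    have h3' : (A.card : ℝ)
        + ((Finset.univ.filter fun i : Fin (m^2) => ¬ ε (Sum.inl i) = 1).card : ℝ)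
        = ((m:ℝ))^2 := by exact_mod_cast h3
    rw [← hsplit, h1, h2]
    linarith
  have hSb : ∑ i : Fin (2*m+1), ε (Sum.inr (Sum.inl i)) ≤ 2*(m:ℝ)+1 := by
    have := Finset.sum_le_card_nsmul Finset.univ
      (fun i : Fin (2*m+1) => ε (Sum.inr (Sum.inl i))) 1
      (fun i _ => by
        show ε (Sum.inr (Sum.inl i)) ≤ 1
        rcases hε (Sum.inr (Sum.inl i)) with h | h <;> rw [h] <;> norm_num)
    rw [Finset.card_univ, Fintype.card_fin, nsmul_eq_mul] at this
    push_cast at this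
    linarith
  have habs : (m:ℝ)^2/2 - 2*(m:ℝ) - 1 ≤ |T| := by
    have : T ≤ -((m:ℝ)^2/2 - 2*(m:ℝ) - 1) := by
      rw [hT, hSa]; linarith
    calc (m:ℝ)^2/2 - 2*(m:ℝ) - 1 ≤ -T := by linarith
      _ ≤ |T| := neg_le_abs T
  -- assemble
  calc (((m : ℝ) ^ 2 - 4 * m - 2) / 4) * (2 / ((m : ℝ) + 1) ^ 2)
      = ((m:ℝ)^2/2 - 2*(m:ℝ) - 1) / ((m:ℝ)+1)^2 := by ring
    _ ≤ |T| / ((m:ℝ)+1)^2 := by gcongr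
    _ = ‖(inner ℂ (weaverV0 m) (weaverP m (s (weaverV0 m))) : ℂ)‖ := by
        rw [hinner2, hnormT]
    _ ≤ ‖weaverV0 m‖ * ‖weaverP m (s (weaverV0 m))‖ := norm_inner_le_norm _ _
    _ = ‖weaverP m (s (weaverP m (weaverV0 m)))‖ := by rw [hnorm, one_mul, hpv0]
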